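/- Let d be a nonnegative integer, q > 0, and f ∈ B_d(-1,1), i.e., f(x) = Σ_{j=0}^d a_j (1-x)^j (x+1)^{d-j} with a_j ≥ 0. For every y ∈ [-1,1], f(y)^q ≤ (qd+1)/(y+1) ∫_{-1}^y f(x)^q dx whenever y > -1, and f(y)^q ≤ (qd+1)/(1-y) ∫_y^1 f(x)^q dx whenever y < 1. -/

import Mathlib

/-!
Write `f x = ∑ A j (1 - x)^j (x + 1)^(d - j)` with `A j ≥ 0` (the class `B_d(-1, 1)`). For
`-1 ≤ x ≤ y ≤ 1` one has `(1 - y)(x + 1) ≤ (1 - x)(y + 1)`, so termwise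
`f y (x + 1)^d ≤ f x (y + 1)^d`. Raising this to the power `q` and integrating the profile
`((x + 1)/(y + 1))^(q d)` over `[-1, y]`, whose integral is `(y + 1)/(q d + 1)`, gives the bound at
the left endpoint. The reflection `x ↦ -x` maps `B_d(-1, 1)` to itself, reversing the coefficients,
and turns it into the bound on `[y, 1]`.
-/

open Finset

section ProfileIntegral

open intervalIntegral

theorem integral_sub_div_sub_rpow {a b p : ℝ} (hab : a < b) (hp : -1 < p) :
    ∫ x in a..b, ((x - a) / (b - a)) ^ p = (b - a) / (p + 1) := by
  have hba : b - a ≠ 0 := (sub_pos.2 hab).ne'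
  rw [integral_comp_sub_right (fun u => (u / (b - a)) ^ p), integral_comp_div (· ^ p) hba,
    sub_self, zero_div, div_self hba, integral_rpow (Or.inl hp), Real.one_rpow,
    Real.zero_rpow (by linarith), smul_eq_mul]
  ring

theorem le_mul_integral_of_mul_rpow_le {g : ℝ → ℝ} {a b c p : ℝ} (hab : a < b) (hp : -1 < p)
    (hg : IntervalIntegrable g MeasureTheory.volume a b)
    (h : ∀ x ∈ Set.Icc a b, c * ((x - a) / (b - a)) ^ p ≤ g x) :
    c ≤ (p + 1) / (b - a) * ∫ x in a..b, g x := by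
  have hba : 0 < b - a := sub_pos.2 hab
  have hp1 : 0 < p + 1 := by linarith
  have hprofile : ∫ x in a..b, c * ((x - a) / (b - a)) ^ p = c * ((b - a) / (p + 1)) := by
    rw [integral_const_mul, integral_sub_div_sub_rpow hab hp]
  have hint : IntervalIntegrable (fun x => ((x - a) / (b - a)) ^ p) MeasureTheory.volume a b :=
    intervalIntegrable_of_integral_ne_zero (by rw [integral_sub_div_sub_rpow hab hp]; positivity)
  have hmono := integral_mono_on hab.le (hint.const_mul c) hg h
  rw [hprofile] at hmono
  calc c = (p + 1) / (b - a) * (c * ((b - a) / (p + 1))) := by field_simp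
    _ ≤ (p + 1) / (b - a) * ∫ x in a..b, g x := by gcongr

end ProfileIntegral

def lorentzPoly (d : ℕ) (A : ℕ → ℝ) (x : ℝ) : ℝ :=
  ∑ j ∈ range (d + 1), A j * (1 - x) ^ j * (x + 1) ^ (d - j)

namespace lorentzPoly

variable {d : ℕ} {A : ℕ → ℝ}

theorem continuous : Continuous (lorentzPoly d A) := by
  unfold lorentzPoly; fun_prop

theorem nonneg (hA : ∀ j ≤ d, 0 ≤ A j) {x : ℝ} (hx : x ∈ Set.Icc (-1 : ℝ) 1) :
    0 ≤ lorentzPoly d A x := by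
  have h₁ : 0 ≤ 1 - x := by linarith [hx.2]
  have h₂ : 0 ≤ x + 1 := by linarith [hx.1]
  exact sum_nonneg fun j hj => by
    have := hA j (Nat.lt_succ_iff.mp (mem_range.mp hj))
    positivity

theorem apply_neg (x : ℝ) : lorentzPoly d A (-x) = lorentzPoly d (fun j => A (d - j)) x := by
  rw [lorentzPoly, ← sum_range_reflect, lorentzPoly]
  refine sum_congr rfl fun j hj => ?_
  have hj : j ≤ d := Nat.lt_succ_iff.mp (mem_range.mp hj)
  rw [add_tsub_cancel_right, Nat.sub_sub_self hj]
  ring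

theorem mul_pow_le (hA : ∀ j ≤ d, 0 ≤ A j) {x y : ℝ} (hx : -1 ≤ x) (hxy : x ≤ y) (hy : y ≤ 1) :
    lorentzPoly d A y * (x + 1) ^ d ≤ lorentzPoly d A x * (y + 1) ^ d := by
  rw [lorentzPoly, lorentzPoly, sum_mul, sum_mul]
  refine sum_le_sum fun j hj => ?_
  have hj : j ≤ d := Nat.lt_succ_iff.mp (mem_range.mp hj)
  -- `(1 - x) * (y + 1) - (1 - y) * (x + 1) = 2 * (y - x)`
  have hcross : ((1 - y) * (x + 1)) ^ j ≤ ((1 - x) * (y + 1)) ^ j :=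
    pow_le_pow_left₀ (by nlinarith) (by nlinarith) j
  have hAj := hA j hj
  have hx1 : 0 ≤ x + 1 := by linarith
  have hy1 : 0 ≤ y + 1 := by linarith
  have hsplit : ∀ z : ℝ, z ^ d = z ^ j * z ^ (d - j) := fun z => by
    rw [← pow_add, Nat.add_sub_cancel' hj]
  calc A j * (1 - y) ^ j * (y + 1) ^ (d - j) * (x + 1) ^ d
      = A j * ((1 - y) * (x + 1)) ^ j * ((x + 1) ^ (d - j) * (y + 1) ^ (d - j)) := by
        rw [hsplit, mul_pow]; ring
    _ ≤ A j * ((1 - x) * (y + 1)) ^ j * ((x + 1) ^ (d - j) * (y + 1) ^ (d - j)) := by gcongr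
    _ = A j * (1 - x) ^ j * (x + 1) ^ (d - j) * (y + 1) ^ d := by
        rw [hsplit, mul_pow]; ring

theorem rpow_le_mul_integral_left (hA : ∀ j ≤ d, 0 ≤ A j) {q y : ℝ} (hq : 0 ≤ q)
    (hy : -1 < y) (hy₁ : y ≤ 1) :
    lorentzPoly d A y ^ q ≤ (q * d + 1) / (y + 1) * ∫ x in (-1 : ℝ)..y, lorentzPoly d A x ^ q := by
  have hprofile : ∀ x ∈ Set.Icc (-1) y,
      lorentzPoly d A y ^ q * ((x - -1) / (y - -1)) ^ (q * d) ≤ lorentzPoly d A x ^ q := by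
    rintro x ⟨hx, hxy⟩
    have hy' : 0 < y + 1 := by linarith
    have hpow : lorentzPoly d A y * ((x + 1) / (y + 1)) ^ d ≤ lorentzPoly d A x := by
      rw [div_pow, mul_div_assoc', div_le_iff₀ (by positivity)]
      exact mul_pow_le hA hx hxy hy₁
    have hx₁ : 0 ≤ (x + 1) / (y + 1) := div_nonneg (by linarith) hy'.le
    calc lorentzPoly d A y ^ q * ((x - -1) / (y - -1)) ^ (q * d)
        = (lorentzPoly d A y * ((x + 1) / (y + 1)) ^ d) ^ q := by
          rw [sub_neg_eq_add, sub_neg_eq_add, Real.mul_rpow (nonneg hA ⟨hy.le, hy₁⟩) (by positivity),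
            ← Real.rpow_natCast, ← Real.rpow_mul hx₁, mul_comm q]
      _ ≤ lorentzPoly d A x ^ q :=
          Real.rpow_le_rpow (mul_nonneg (nonneg hA ⟨hy.le, hy₁⟩) (by positivity)) hpow hq
  have hint : IntervalIntegrable (fun x => lorentzPoly d A x ^ q) MeasureTheory.volume (-1) y :=
    (continuous.rpow_const fun _ => Or.inr hq).intervalIntegrable _ _
  have h := le_mul_integral_of_mul_rpow_le hy
    (by linarith [mul_nonneg hq d.cast_nonneg]) hint hprofile
  rwa [sub_neg_eq_add] at h

end lorentzPoly

theorem pointwise_nikolskii (d : ℕ) (q : ℝ) (hq : 0 < q)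
    (f : ℝ → ℝ) (A : ℕ → ℝ) (hA : ∀ j ≤ d, 0 ≤ A j)
    (hf : ∀ x : ℝ, f x = ∑ j ∈ range (d + 1), A j * (1 - x) ^ j * (x + 1) ^ (d - j)) :
    ∀ y ∈ Set.Icc (-1 : ℝ) 1,
      (-1 < y → f y ^ q ≤ ((q * d + 1) / (y + 1)) * ∫ x in (-1 : ℝ)..y, f x ^ q) ∧
      (y < 1 → f y ^ q ≤ ((q * d + 1) / (1 - y)) * ∫ x in y..(1 : ℝ), f x ^ q) := by
  rintro y ⟨hy₀, hy₁⟩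
  obtain rfl : f = lorentzPoly d A := funext hf
  refine ⟨fun hy => lorentzPoly.rpow_le_mul_integral_left hA hq.le hy hy₁, fun hy => ?_⟩
  have hreflected := lorentzPoly.rpow_le_mul_integral_left (d := d) (A := fun j => A (d - j))
    (fun j _ => hA _ (Nat.sub_le d j)) hq.le (neg_lt_neg hy) (by linarith)
  simp only [← lorentzPoly.apply_neg, neg_neg] at hreflected
  rwa [intervalIntegral.integral_comp_neg (fun x => lorentzPoly d A x ^ q), neg_neg, neg_neg,
    neg_add_eq_sub] at hreflected
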